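/- arXiv:1812.10867 — 2 statements merged into one kernel-verified Lean document; each statement's English description precedes it below -/
import Mathlib

section
/- Let a₀ ∈ M_+(n,m) and u ∈ M(n,m) with L₀ = u a₀^+, δ₀ = tr(L₀^T L₀), τ₀ = tr(L₀). Define f(t) = (m δ₀/4) t² + τ₀ t + 1, s(t) = ∫₀ᵗ dσ/f(σ), ω₀ = L₀^T − L₀, and P₀ = (a₀^T a₀)^{-1} u^T a₀ − (τ₀/m) I_m. Then the curve a(t) = f(t)^{1/m} exp(−s(t) ω₀) a₀ exp(s(t) P₀) satisfies the geodesic equation a'' = a'(a^Ta)^{-1}(a')^T a + a'(a^Ta)^{-1}a^T a' − a(a^Ta)^{-1}(a')^T a' + (1/2) tr(a'(a^Ta)^{-1}(a')^T) a − tr(a'(a^Ta)^{-1}a^T) a', with a(0) = a₀ and a'(0) = u. -/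
/-!
Write the curve as `a(t) = c(t) • O(t) * a₀ * Q(t)` with `c = f^{1/m}`, `O = exp(-s ω₀)` and
`Q = exp(s P₀)`. Since `ω₀` is skew, `O` is orthogonal, and the right-hand side of the geodesic
equation is equivariant under `x ↦ O x (c • Q)` for orthogonal `O` and invertible `c • Q`. So
the equation can be pulled back to the base point `a₀`, where the velocity becomes
`Z = α a₀ + μ u` with `α = δ₀ t / (2f)` and `μ = 1/f = s'`. There it reduces to the scalar system
`μ' = -η μ`, `α' = ε/2 - η α` with `η = tr(Z (a₀ᵀa₀)⁻¹ a₀ᵀ) = f'/f` and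
`ε = tr(Z (a₀ᵀa₀)⁻¹ Zᵀ) = δ₀/f`; both identities for `η` and `ε` are where the particular
quadratic `f` is needed.
-/

open Matrix

attribute [local instance] Matrix.frobeniusNormedAddCommGroup Matrix.frobeniusNormedSpace

noncomputable section

/-- Moore-Penrose pseudoinverse of a full-rank `n × m` matrix. -/
def aplus {n m : ℕ} (a : Matrix (Fin n) (Fin m) ℝ) : Matrix (Fin m) (Fin n) ℝ :=
  (aᵀ * a)⁻¹ * aᵀ

/-- Right-hand side of the geodesic equation `a_tt = geoRHS (a, a_t)` of the
metric `⟨u,v⟩_a = tr(u (aᵀa)⁻¹ vᵀ)√det(aᵀa)` on full-rank `n × m` matrices. -/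
def geoRHS {n m : ℕ} (x v : Matrix (Fin n) (Fin m) ℝ) : Matrix (Fin n) (Fin m) ℝ :=
  v * (xᵀ * x)⁻¹ * vᵀ * x + v * (xᵀ * x)⁻¹ * xᵀ * v - x * (xᵀ * x)⁻¹ * vᵀ * v
    + ((1 / 2) * Matrix.trace (v * (xᵀ * x)⁻¹ * vᵀ)) • x
    - (Matrix.trace (v * (xᵀ * x)⁻¹ * xᵀ)) • v

theorem Matrix.isUnit_det_of_rank_eq {ι K : Type*} [Fintype ι] [DecidableEq ι] [Field K]
    {A : Matrix ι ι K} (h : A.rank = Fintype.card ι) : IsUnit A.det := by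
  rw [← isUnit_iff_isUnit_det, ← mulVec_surjective_iff_isUnit, ← Matrix.coe_mulVecLin,
    ← LinearMap.range_eq_top]
  apply Submodule.eq_top_of_finrank_eq
  rw [← Matrix.rank, h, Module.finrank_fintype_fun_eq_card]

section Equivariance

variable {n m : ℕ} (x v : Matrix (Fin n) (Fin m) ℝ)

theorem geoRHS_orthogonal_mul {O : Matrix (Fin n) (Fin n) ℝ} (hO : Oᵀ * O = 1) :
    geoRHS (O * x) (O * v) = O * geoRHS x v := by
  have hOO : ∀ {k} (X : Matrix (Fin n) (Fin k) ℝ), Oᵀ * (O * X) = X := fun X => by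
    rw [← Matrix.mul_assoc, hO, Matrix.one_mul]
  have htr : ∀ y w : Matrix (Fin n) (Fin m) ℝ,
      trace (O * y * (xᵀ * x)⁻¹ * (O * w)ᵀ) = trace (y * (xᵀ * x)⁻¹ * wᵀ) := fun y w => by
    rw [transpose_mul, show O * y * (xᵀ * x)⁻¹ * (wᵀ * Oᵀ) = O * (y * (xᵀ * x)⁻¹ * wᵀ) * Oᵀ by
      simp only [Matrix.mul_assoc], trace_mul_cycle, hO, Matrix.one_mul]
  have hgram : (O * x)ᵀ * (O * x) = xᵀ * x := by rw [transpose_mul, Matrix.mul_assoc, hOO]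
  rw [geoRHS, hgram, htr, htr]
  simp only [geoRHS, transpose_mul, Matrix.mul_assoc, hOO, Matrix.mul_sub, Matrix.mul_add,
    Matrix.mul_smul]

theorem geoRHS_mul_of_isUnit {Q : Matrix (Fin m) (Fin m) ℝ} (hQ : IsUnit Q.det) :
    geoRHS (x * Q) (v * Q) = geoRHS x v * Q := by
  have hinv : ((x * Q)ᵀ * (x * Q))⁻¹ = Q⁻¹ * (xᵀ * x)⁻¹ * Qᵀ⁻¹ := by
    rw [transpose_mul, show Qᵀ * xᵀ * (x * Q) = Qᵀ * (xᵀ * x) * Q by simp only [Matrix.mul_assoc],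
      Matrix.mul_inv_rev, Matrix.mul_inv_rev, Matrix.mul_assoc]
  have hQQ : ∀ {k} (X : Matrix (Fin m) (Fin k) ℝ), Q * (Q⁻¹ * X) = X := fun X => by
    rw [← Matrix.mul_assoc, Matrix.mul_nonsing_inv Q hQ, Matrix.one_mul]
  have hQQ' : ∀ {k} (X : Matrix (Fin m) (Fin k) ℝ), Qᵀ⁻¹ * (Qᵀ * X) = X := fun X => by
    rw [← Matrix.mul_assoc, Matrix.nonsing_inv_mul _ (by rwa [det_transpose]), Matrix.one_mul]
  rw [geoRHS, hinv]
  simp only [geoRHS, transpose_mul, Matrix.mul_assoc, hQQ, hQQ', Matrix.sub_mul,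
    Matrix.add_mul, Matrix.smul_mul]

end Equivariance

theorem HasDerivAt.matrix_mul {l m n : Type*} [Fintype l] [Fintype m] [Fintype n]
    {A : ℝ → Matrix l m ℝ} {B : ℝ → Matrix m n ℝ} {A' : Matrix l m ℝ} {B' : Matrix m n ℝ} {t : ℝ}
    (hA : HasDerivAt A A' t) (hB : HasDerivAt B B' t) :
    HasDerivAt (fun τ => A τ * B τ) (A' * B t + A t * B') t := by
  have hmul : IsBoundedBilinearMap ℝ (fun p : Matrix l m ℝ × Matrix m n ℝ => p.1 * p.2) :=
    { add_left := Matrix.add_mul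
      smul_left := Matrix.smul_mul
      add_right := Matrix.mul_add
      smul_right := fun c a b => Matrix.mul_smul a c b
      bound := ⟨1, one_pos, fun a b => by simpa using Matrix.frobenius_norm_mul a b⟩ }
  refine ((hmul.hasFDerivAt (A t, B t)).comp t
    (hA.hasFDerivAt.prodMk hB.hasFDerivAt)).hasDerivAt.congr_deriv ?_
  change A t * ((1 : ℝ) • B') + ((1 : ℝ) • A') * B t = A' * B t + A t * B'
  rw [one_smul, one_smul, add_comm]

section Exponential

attribute [local instance] Matrix.frobeniusNormedRing Matrix.frobeniusNormedAlgebra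

variable {ι κ : Type*} [Fintype ι] [DecidableEq ι] [Fintype κ] [DecidableEq κ]

theorem Matrix.transpose_exp_mul_exp_of_transpose_eq_neg {W : Matrix ι ι ℝ}
    (hW : Wᵀ = -W) : (NormedSpace.exp W)ᵀ * NormedSpace.exp W = 1 := by
  rw [← Matrix.exp_transpose, hW, ← Matrix.exp_add_of_commute _ _ (Commute.neg_left (.refl W)),
    neg_add_cancel, NormedSpace.exp_zero]

theorem HasDerivAt.exp_smul_const (W : Matrix ι ι ℝ) {s : ℝ → ℝ} {s' t : ℝ}
    (hs : HasDerivAt s s' t) :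
    HasDerivAt (fun τ => NormedSpace.exp (s τ • W)) (s' • (W * NormedSpace.exp (s t • W))) t :=
  (hasDerivAt_exp_smul_const' W (s t)).scomp t hs

theorem Matrix.mul_exp_smul_comm (W : Matrix ι ι ℝ) (a : ℝ) :
    W * NormedSpace.exp (a • W) = NormedSpace.exp (a • W) * W :=
  ((Commute.refl W).smul_right a).exp_right.eq

theorem hasDerivAt_smul_exp_mul_mul_exp (W : Matrix ι ι ℝ)
    (P : Matrix κ κ ℝ) {c s : ℝ → ℝ} {X : ℝ → Matrix ι κ ℝ}
    {lam s' t : ℝ} {X' : Matrix ι κ ℝ} (hc : HasDerivAt c (c t * lam) t)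
    (hs : HasDerivAt s s' t) (hX : HasDerivAt X X' t) :
    HasDerivAt (fun τ => c τ • (NormedSpace.exp (-s τ • W) * X τ * NormedSpace.exp (s τ • P)))
      (c t • (NormedSpace.exp (-s t • W) * (lam • X t + X' + s' • (X t * P - W * X t))
        * NormedSpace.exp (s t • P))) t := by
  refine (hc.smul (((hs.neg.exp_smul_const W).matrix_mul hX).matrix_mul
    (hs.exp_smul_const P))).congr_deriv ?_
  simp only [Pi.neg_apply, Matrix.mul_exp_smul_comm, Matrix.mul_add, Matrix.add_mul,
    Matrix.mul_sub, Matrix.sub_mul, Matrix.smul_mul, Matrix.mul_smul, Matrix.mul_assoc]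
  module

end Exponential

theorem hasDerivAt_integral_inv {g : ℝ → ℝ} (hg : Continuous g) {t : ℝ}
    (ht : ∀ σ ∈ Set.uIcc (0 : ℝ) t, g σ ≠ 0) :
    HasDerivAt (fun τ => ∫ σ in (0 : ℝ)..τ, (g σ)⁻¹) (g t)⁻¹ t :=
  intervalIntegral.integral_hasDerivAt_right
    (hg.continuousOn.inv₀ ht).intervalIntegrable
    (hg.measurable.inv.stronglyMeasurable).stronglyMeasurableAtFilter
    (hg.continuousAt.inv₀ (ht t Set.right_mem_uIcc))

theorem isOpen_setOf_forall_uIcc_pos {g : ℝ → ℝ} (hg : Continuous g) (a : ℝ) :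
    IsOpen {t | ∀ σ ∈ Set.uIcc a t, 0 < g σ} := by
  refine Metric.isOpen_iff.mpr fun t ht => ?_
  obtain ⟨δ, hδ, hsub⟩ := isCompact_uIcc.exists_thickening_subset_open
    (isOpen_lt continuous_const hg) ht
  refine ⟨δ, hδ, fun τ hτ σ hσ => ?_⟩
  rcases Set.uIcc_subset_uIcc_union_uIcc (b := t) hσ with h | h
  · exact ht σ h
  · refine hsub (Metric.mem_thickening_iff.mpr ⟨t, Set.right_mem_uIcc, ?_⟩)
    calc dist σ t ≤ dist t τ := Real.dist_le_of_mem_uIcc h Set.left_mem_uIcc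
      _ = dist τ t := dist_comm t τ
      _ < δ := hτ

namespace ExplicitGeodesic

variable {n m : ℕ} (a0 u : Matrix (Fin n) (Fin m) ℝ)

def tau0 : ℝ := trace (u * aplus a0)

def delta0 : ℝ := trace ((u * aplus a0)ᵀ * (u * aplus a0))

def omega0 : Matrix (Fin n) (Fin n) ℝ := (u * aplus a0)ᵀ - u * aplus a0

def P0 : Matrix (Fin m) (Fin m) ℝ := (a0ᵀ * a0)⁻¹ * uᵀ * a0 - (tau0 a0 u / (m : ℝ)) • 1

def f (t : ℝ) : ℝ := ((m : ℝ) * delta0 a0 u / 4) * t ^ 2 + tau0 a0 u * t + 1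

def s (t : ℝ) : ℝ := ∫ σ in (0 : ℝ)..t, (f a0 u σ)⁻¹

def transport (t : ℝ) (X : Matrix (Fin n) (Fin m) ℝ) : Matrix (Fin n) (Fin m) ℝ :=
  (f a0 u t ^ ((1 : ℝ) / (m : ℝ))) •
    (NormedSpace.exp ((-(s a0 u t)) • omega0 a0 u) * X * NormedSpace.exp ((s a0 u t) • P0 a0 u))

def alpha (t : ℝ) : ℝ := delta0 a0 u * t / (2 * f a0 u t)

def mu (t : ℝ) : ℝ := (f a0 u t)⁻¹

/-- The velocity of the curve, pulled back to the base point by `transport`. -/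
def baseVelocity (t : ℝ) : Matrix (Fin n) (Fin m) ℝ := alpha a0 u t • a0 + mu a0 u t • u

theorem inv_gram_transpose : ((a0ᵀ * a0)⁻¹)ᵀ = (a0ᵀ * a0)⁻¹ := by
  rw [transpose_nonsing_inv, transpose_mul, transpose_transpose]

theorem omega0_eq : omega0 a0 u = a0 * (a0ᵀ * a0)⁻¹ * uᵀ - u * (a0ᵀ * a0)⁻¹ * a0ᵀ := by
  simp only [omega0, aplus, transpose_mul, transpose_transpose, inv_gram_transpose,
    Matrix.mul_assoc]

theorem omega0_transpose : (omega0 a0 u)ᵀ = -omega0 a0 u := by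
  rw [omega0, transpose_sub, transpose_transpose, neg_sub]

theorem f_zero : f a0 u 0 = 1 := by simp [f]

theorem s_zero : s a0 u 0 = 0 := intervalIntegral.integral_same

theorem transport_zero (X : Matrix (Fin n) (Fin m) ℝ) : transport a0 u 0 X = X := by
  simp [transport, f_zero, s_zero]

theorem baseVelocity_zero : baseVelocity a0 u 0 = u := by
  simp [baseVelocity, alpha, mu, f_zero]

theorem continuous_f : Continuous (f a0 u) := by
  unfold f
  fun_prop

theorem hasDerivAt_f (t : ℝ) :
    HasDerivAt (f a0 u) ((m : ℝ) * delta0 a0 u / 2 * t + tau0 a0 u) t := by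
  have h := (((hasDerivAt_pow 2 t).const_mul ((m : ℝ) * delta0 a0 u / 4)).add
    ((hasDerivAt_id t).const_mul (tau0 a0 u))).add_const 1
  refine h.congr_deriv ?_
  norm_num
  ring

theorem hasDerivAt_alpha {t : ℝ} (hf : f a0 u t ≠ 0) :
    HasDerivAt (alpha a0 u) ((alpha a0 u t ^ 2 * m + 2 * alpha a0 u t * mu a0 u t * tau0 a0 u
      + mu a0 u t ^ 2 * delta0 a0 u) / 2
      - (alpha a0 u t * m + mu a0 u t * tau0 a0 u) * alpha a0 u t) t := by
  refine (((hasDerivAt_id t).const_mul _).div ((hasDerivAt_f a0 u t).const_mul 2)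
    (mul_ne_zero two_ne_zero hf)).congr_deriv ?_
  simp only [alpha, mu, id]
  field_simp
  simp only [f]
  ring

theorem hasDerivAt_mu {t : ℝ} (hf : f a0 u t ≠ 0) :
    HasDerivAt (mu a0 u) (-((alpha a0 u t * m + mu a0 u t * tau0 a0 u) * mu a0 u t)) t := by
  refine ((hasDerivAt_f a0 u t).inv hf).congr_deriv ?_
  simp only [alpha, mu]
  field_simp

theorem transport_eq_mul (t : ℝ) (X : Matrix (Fin n) (Fin m) ℝ) :
    transport a0 u t X = NormedSpace.exp ((-(s a0 u t)) • omega0 a0 u) * X *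
      (f a0 u t ^ ((1 : ℝ) / (m : ℝ)) • NormedSpace.exp ((s a0 u t) • P0 a0 u)) :=
  (Matrix.mul_smul _ _ _).symm

variable {a0}

theorem trace_gram_a0_a0 (ha : IsUnit (a0ᵀ * a0).det) :
    trace (a0 * (a0ᵀ * a0)⁻¹ * a0ᵀ) = m := by
  rw [trace_mul_cycle, mul_nonsing_inv _ ha, trace_one, Fintype.card_fin]

theorem trace_gram_u_a0 : trace (u * (a0ᵀ * a0)⁻¹ * a0ᵀ) = tau0 a0 u := by
  rw [tau0, aplus, Matrix.mul_assoc]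

theorem trace_gram_a0_u : trace (a0 * (a0ᵀ * a0)⁻¹ * uᵀ) = tau0 a0 u := by
  rw [← trace_transpose, ← trace_gram_u_a0]
  simp only [transpose_mul, transpose_transpose, inv_gram_transpose, Matrix.mul_assoc]

theorem trace_gram_u_u (ha : IsUnit (a0ᵀ * a0).det) :
    trace (u * (a0ᵀ * a0)⁻¹ * uᵀ) = delta0 a0 u := by
  rw [delta0, trace_mul_comm (u * aplus a0)ᵀ, aplus]
  simp only [transpose_mul, transpose_transpose, inv_gram_transpose, Matrix.mul_assoc]
  rw [← Matrix.mul_assoc a0ᵀ a0, ← Matrix.mul_assoc (a0ᵀ * a0)⁻¹, nonsing_inv_mul _ ha,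
    Matrix.one_mul]

theorem omega0_mul_self (ha : IsUnit (a0ᵀ * a0).det) :
    omega0 a0 u * a0 = a0 * ((a0ᵀ * a0)⁻¹ * uᵀ * a0) - u := by
  rw [omega0_eq]
  simp only [Matrix.sub_mul, Matrix.mul_assoc, nonsing_inv_mul _ ha, Matrix.mul_one]

theorem velocity_identity (ha : IsUnit (a0ᵀ * a0).det) (α μ : ℝ) :
    (α + μ * tau0 a0 u / m) • a0 + μ • (a0 * P0 a0 u - omega0 a0 u * a0) = α • a0 + μ • u := by
  rw [omega0_mul_self u ha, P0]
  simp only [Matrix.mul_sub, Matrix.mul_smul, Matrix.mul_one, Matrix.mul_assoc, smul_sub,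
    add_smul]
  module

theorem acceleration_identity (ha : IsUnit (a0ᵀ * a0).det) {α μ α' μ' : ℝ}
    (hα' : α' = (α ^ 2 * m + 2 * α * μ * tau0 a0 u + μ ^ 2 * delta0 a0 u) / 2
      - (α * m + μ * tau0 a0 u) * α)
    (hμ' : μ' = -((α * m + μ * tau0 a0 u) * μ)) :
    geoRHS a0 (α • a0 + μ • u) = (α + μ * tau0 a0 u / m) • (α • a0 + μ • u) + (α' • a0 + μ' • u)
      + μ • ((α • a0 + μ • u) * P0 a0 u - omega0 a0 u * (α • a0 + μ • u)) := by
  have hη : trace ((α • a0 + μ • u) * (a0ᵀ * a0)⁻¹ * a0ᵀ) = α * m + μ * tau0 a0 u := by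
    simp only [Matrix.add_mul, Matrix.smul_mul, trace_add, trace_smul, trace_gram_a0_a0 ha,
      trace_gram_u_a0, smul_eq_mul]
  have hε : trace ((α • a0 + μ • u) * (a0ᵀ * a0)⁻¹ * (α • a0 + μ • u)ᵀ)
      = α ^ 2 * m + 2 * α * μ * tau0 a0 u + μ ^ 2 * delta0 a0 u := by
    simp only [transpose_add, transpose_smul, Matrix.add_mul, Matrix.mul_add, Matrix.smul_mul,
      Matrix.mul_smul, trace_add, trace_smul, trace_gram_a0_a0 ha, trace_gram_u_a0,
      trace_gram_a0_u, trace_gram_u_u u ha, smul_eq_mul]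
    ring
  rw [geoRHS, hη, hε, P0, omega0_eq, hα', hμ']
  simp only [transpose_add, transpose_smul, Matrix.mul_add, Matrix.add_mul,
    Matrix.mul_sub, Matrix.sub_mul, Matrix.smul_mul, Matrix.mul_smul, Matrix.mul_one,
    Matrix.mul_assoc, smul_add, smul_sub, smul_smul, nonsing_inv_mul _ ha]
  match_scalars <;> ring

theorem hasDerivAt_s {t : ℝ} (ht : ∀ σ ∈ Set.uIcc (0 : ℝ) t, 0 < f a0 u σ) :
    HasDerivAt (s a0 u) (f a0 u t)⁻¹ t :=
  hasDerivAt_integral_inv (continuous_f a0 u) fun σ hσ => (ht σ hσ).ne'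

theorem hasDerivAt_transport (hm : (m : ℝ) ≠ 0) {t : ℝ}
    (ht : ∀ σ ∈ Set.uIcc (0 : ℝ) t, 0 < f a0 u σ)
    {X : ℝ → Matrix (Fin n) (Fin m) ℝ} {X' : Matrix (Fin n) (Fin m) ℝ} (hX : HasDerivAt X X' t) :
    HasDerivAt (fun τ => transport a0 u τ (X τ))
      (transport a0 u t ((alpha a0 u t + mu a0 u t * tau0 a0 u / m) • X t + X'
          + mu a0 u t • (X t * P0 a0 u - omega0 a0 u * X t))) t := by
  have hf := ht t Set.right_mem_uIcc
  -- `alpha + mu * tau0 / m = f' / (m f)` is the logarithmic derivative of `f ^ (1 / m)`.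
  have hc : HasDerivAt (fun τ => f a0 u τ ^ ((1 : ℝ) / m))
      (f a0 u t ^ ((1 : ℝ) / m) * (alpha a0 u t + mu a0 u t * tau0 a0 u / m)) t := by
    refine ((hasDerivAt_f a0 u t).rpow_const (Or.inl hf.ne')).congr_deriv ?_
    rw [Real.rpow_sub hf, Real.rpow_one, alpha, mu]
    field_simp
  exact hasDerivAt_smul_exp_mul_mul_exp _ _ hc (hasDerivAt_s u ht) hX

theorem geoRHS_transport {t : ℝ} (ht : 0 < f a0 u t) (x v : Matrix (Fin n) (Fin m) ℝ) :
    geoRHS (transport a0 u t x) (transport a0 u t v) = transport a0 u t (geoRHS x v) := by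
  have hO := Matrix.transpose_exp_mul_exp_of_transpose_eq_neg (W := (-(s a0 u t)) • omega0 a0 u)
    (by rw [transpose_smul, omega0_transpose, smul_neg])
  have hQ : IsUnit
      (f a0 u t ^ ((1 : ℝ) / (m : ℝ)) • NormedSpace.exp ((s a0 u t) • P0 a0 u)).det := by
    rw [det_smul]
    exact ((Real.rpow_pos_of_pos ht _).ne'.isUnit.pow _).mul
      ((isUnit_iff_isUnit_det _).mp (Matrix.isUnit_exp _))
  simp only [transport_eq_mul]
  rw [geoRHS_mul_of_isUnit _ _ hQ, geoRHS_orthogonal_mul _ _ hO]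

theorem hasDerivAt_transport_self (ha : IsUnit (a0ᵀ * a0).det) (hm : (m : ℝ) ≠ 0) {t : ℝ}
    (ht : ∀ σ ∈ Set.uIcc (0 : ℝ) t, 0 < f a0 u σ) :
    HasDerivAt (fun τ => transport a0 u τ a0) (transport a0 u t (baseVelocity a0 u t)) t := by
  refine (hasDerivAt_transport u hm ht (hasDerivAt_const t a0)).congr_deriv ?_
  rw [add_zero, baseVelocity, velocity_identity u ha]

theorem hasDerivAt_transport_baseVelocity (ha : IsUnit (a0ᵀ * a0).det) (hm : (m : ℝ) ≠ 0)
    {t : ℝ} (ht : ∀ σ ∈ Set.uIcc (0 : ℝ) t, 0 < f a0 u σ) :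
    HasDerivAt (fun τ => transport a0 u τ (baseVelocity a0 u τ))
      (geoRHS (transport a0 u t a0) (transport a0 u t (baseVelocity a0 u t))) t := by
  have hf := ht t Set.right_mem_uIcc
  have hZ : HasDerivAt (baseVelocity a0 u) _ t := ((hasDerivAt_alpha a0 u hf.ne').smul_const a0).add
    ((hasDerivAt_mu a0 u hf.ne').smul_const u)
  refine (hasDerivAt_transport u hm ht hZ).congr_deriv ?_
  rw [geoRHS_transport u hf, baseVelocity, acceleration_identity u ha rfl rfl]

end ExplicitGeodesic

theorem stmt_10_general {n m : ℕ} (hm : 0 < m)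
    (a0 u : Matrix (Fin n) (Fin m) ℝ) (ha0 : a0.rank = m)
    (L0 : Matrix (Fin n) (Fin n) ℝ) (hL0 : L0 = u * aplus a0)
    (d0 t0 : ℝ) (hd0 : d0 = Matrix.trace (L0ᵀ * L0)) (ht0 : t0 = Matrix.trace L0)
    (f : ℝ → ℝ) (hf : ∀ t, f t = ((m : ℝ) * d0 / 4) * t ^ 2 + t0 * t + 1)
    (s : ℝ → ℝ) (hs : ∀ t, s t = ∫ σ in (0:ℝ)..t, (f σ)⁻¹)
    (w0 : Matrix (Fin n) (Fin n) ℝ) (hw0 : w0 = L0ᵀ - L0)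
    (P0 : Matrix (Fin m) (Fin m) ℝ)
    (hP0 : P0 = (a0ᵀ * a0)⁻¹ * uᵀ * a0 - (t0 / (m : ℝ)) • (1 : Matrix (Fin m) (Fin m) ℝ))
    (A : ℝ → Matrix (Fin n) (Fin m) ℝ)
    (hA : ∀ t, A t = (f t ^ ((1 : ℝ) / (m : ℝ))) •
      (NormedSpace.exp ((-(s t)) • w0) * a0 * NormedSpace.exp ((s t) • P0))) :
    A 0 = a0 ∧ HasDerivAt A u 0 ∧
      ∀ t, (∀ σ ∈ Set.uIcc (0 : ℝ) t, 0 < f σ) →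
        HasDerivAt (deriv A) (geoRHS (A t) (deriv A t)) t := by
  open ExplicitGeodesic in
  subst hL0 hd0 ht0 hw0 hP0
  obtain rfl : f = ExplicitGeodesic.f a0 u := funext hf
  obtain rfl : s = ExplicitGeodesic.s a0 u := funext hs
  obtain rfl : A = fun t => transport a0 u t a0 := funext hA
  have ha : IsUnit (a0ᵀ * a0).det :=
    isUnit_det_of_rank_eq (by rw [rank_transpose_mul_self, ha0, Fintype.card_fin])
  have hm' : (m : ℝ) ≠ 0 := by exact_mod_cast hm.ne'
  refine ⟨transport_zero a0 u a0, ?_, fun t ht => ?_⟩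
  · simpa only [baseVelocity_zero, transport_zero] using
      hasDerivAt_transport_self u ha hm' (t := 0) (by simp [f_zero])
  · have hderiv : deriv (fun τ => transport a0 u τ a0) =ᶠ[nhds t]
        fun τ => transport a0 u τ (baseVelocity a0 u τ) := by
      filter_upwards [(isOpen_setOf_forall_uIcc_pos (continuous_f a0 u) 0).mem_nhds ht] with τ hτ
      exact (hasDerivAt_transport_self u ha hm' hτ).deriv
    rw [hderiv.eq_of_nhds]
    exact (hasDerivAt_transport_baseVelocity u ha hm' ht).congr_of_eventuallyEq hderiv

/-- the explicit formula
`a(t) = f(t)^{1/m} exp(-s(t) ω₀) a₀ exp(s(t) P₀)` solves the geodesic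
equation with `a(0) = a₀`, `a'(0) = u`, on the interval where `f > 0`. -/
theorem stmt_10 {n m : ℕ} (hmn : m ≤ n) (hm : 0 < m)
    (a0 u : Matrix (Fin n) (Fin m) ℝ) (ha0 : a0.rank = m)
    (L0 : Matrix (Fin n) (Fin n) ℝ) (hL0 : L0 = u * aplus a0)
    (d0 t0 : ℝ) (hd0 : d0 = Matrix.trace (L0ᵀ * L0)) (ht0 : t0 = Matrix.trace L0)
    (f : ℝ → ℝ) (hf : ∀ t, f t = ((m : ℝ) * d0 / 4) * t ^ 2 + t0 * t + 1)
    (s : ℝ → ℝ) (hs : ∀ t, s t = ∫ σ in (0:ℝ)..t, (f σ)⁻¹)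
    (w0 : Matrix (Fin n) (Fin n) ℝ) (hw0 : w0 = L0ᵀ - L0)
    (P0 : Matrix (Fin m) (Fin m) ℝ)
    (hP0 : P0 = (a0ᵀ * a0)⁻¹ * uᵀ * a0 - (t0 / (m : ℝ)) • (1 : Matrix (Fin m) (Fin m) ℝ))
    (A : ℝ → Matrix (Fin n) (Fin m) ℝ)
    (hA : ∀ t, A t = (f t ^ ((1 : ℝ) / (m : ℝ))) •
      (NormedSpace.exp ((-(s t)) • w0) * a0 * NormedSpace.exp ((s t) • P0))) :
    A 0 = a0 ∧ HasDerivAt A u 0 ∧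
      ∀ t, (∀ σ ∈ Set.uIcc (0 : ℝ) t, 0 < f σ) →
        HasDerivAt (deriv A) (geoRHS (A t) (deriv A t)) t :=
  stmt_10_general hm a0 u ha0 L0 hL0 d0 t0 hd0 ht0 f hf s hs w0 hw0 P0 hP0 A hA
end
end

section
/- Let a₀ ∈ M_+(n,m) and initial velocity a'(0) = c a₀ with c < 0. Then the geodesic of the metric ⟨u,v⟩_a = tr(u(a^Ta)^{-1}v^T)√det(a^Ta) with these initial data is a(t) = (1 + cmt/2)^{2/m} a₀, which reaches the zero matrix at the finite time T = 2/(|c| m). In particular M_+(n,m) is geodesically incomplete. -/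
/-!
Along the ray through `a₀` the geodesic equation reduces to a scalar ODE: since `a₀ (a₀ᵀa₀)⁻¹ a₀ᵀ`
is the orthogonal projection onto the column space of `a₀`, which has trace `m`, the curve
`f(t) • a₀` is a geodesic exactly when `f f'' = (1 - m/2) f'²`. A power `f = (1 + k t)^p` of an
affine function satisfies `f f'' = (1 - 1/p) f'²`, so `p = 2/m` works, and `k = c m / 2` matches the
initial velocity. The affine base vanishes at `t = T`, where the curve hits `0`.
-/

open Matrix

attribute [local instance] Matrix.frobeniusNormedAddCommGroup Matrix.frobeniusNormedSpace

noncomputable section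

open Filter Topology

theorem Matrix.isUnit_of_rank_eq_card {ι K : Type*} [Fintype ι] [DecidableEq ι] [Field K]
    {A : Matrix ι ι K} (hA : A.rank = Fintype.card ι) : IsUnit A := by
  rw [← mulVec_surjective_iff_isUnit, ← coe_mulVecLin, ← LinearMap.range_eq_top]
  exact Submodule.eq_top_of_finrank_eq (by rwa [Module.finrank_fintype_fun_eq_card])

theorem Matrix.isUnit_transpose_mul_self_of_rank_eq {n m : ℕ} {a : Matrix (Fin n) (Fin m) ℝ}
    (ha : a.rank = m) : IsUnit (aᵀ * a) :=
  isUnit_of_rank_eq_card (by rw [rank_transpose_mul_self, ha, Fintype.card_fin])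

theorem geoRHS_smul_smul {n m : ℕ} {a : Matrix (Fin n) (Fin m) ℝ} (ha : IsUnit (aᵀ * a))
    (α β : ℝ) : geoRHS (α • a) (β • a) = ((1 - (m : ℝ) / 2) * β ^ 2 / α) • a := by
  rcases eq_or_ne α 0 with rfl | hα
  · simp [geoRHS]
  have hdet : IsUnit (aᵀ * a).det := (isUnit_iff_isUnit_det _).mp ha
  have hproj : a * (aᵀ * a)⁻¹ * aᵀ * a = a := by
    rw [Matrix.mul_assoc, Matrix.mul_assoc, nonsing_inv_mul _ hdet, Matrix.mul_one]
  have htrace : trace (a * (aᵀ * a)⁻¹ * aᵀ) = m := by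
    rw [trace_mul_comm, ← Matrix.mul_assoc, mul_nonsing_inv _ hdet, trace_one, Fintype.card_fin]
  have hinv : ((α • a)ᵀ * (α • a))⁻¹ = (α ^ 2)⁻¹ • (aᵀ * a)⁻¹ := by
    refine inv_eq_right_inv ?_
    simp only [transpose_smul, Matrix.smul_mul, Matrix.mul_smul, smul_smul,
      mul_nonsing_inv _ hdet]
    rw [← sq, inv_mul_cancel₀ (pow_ne_zero 2 hα), one_smul]
  rw [geoRHS, hinv]
  simp only [transpose_smul, Matrix.smul_mul, Matrix.mul_smul, smul_smul, trace_smul, smul_eq_mul,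
    hproj, htrace, ← add_smul, ← sub_smul]
  congr 1
  field_simp
  ring

theorem hasDerivAt_deriv_smul_const_geoRHS {n m : ℕ} {a : Matrix (Fin n) (Fin m) ℝ}
    (ha : IsUnit (aᵀ * a)) {f : ℝ → ℝ} {t : ℝ} (hdiff : ∀ᶠ s in 𝓝 t, DifferentiableAt ℝ f s)
    (hf : HasDerivAt (deriv f) ((1 - (m : ℝ) / 2) * deriv f t ^ 2 / f t) t) :
    HasDerivAt (deriv fun s => f s • a) (geoRHS (f t • a) (deriv (fun s => f s • a) t)) t := by
  have hderiv : deriv (fun s => f s • a) =ᶠ[𝓝 t] fun s => deriv f s • a :=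
    hdiff.mono fun s hs => deriv_smul_const hs a
  rw [hderiv.eq_of_nhds, geoRHS_smul_smul ha]
  exact (hf.smul_const a).congr_of_eventuallyEq hderiv

theorem hasDerivAt_one_add_mul_rpow {k p t : ℝ} (ht : 0 < 1 + k * t) :
    HasDerivAt (fun s => (1 + k * s) ^ p) (p * k * (1 + k * t) ^ (p - 1)) t := by
  have hlin : HasDerivAt (fun s => 1 + k * s) k t := by
    simpa using ((hasDerivAt_id t).const_mul k).const_add 1
  convert hlin.rpow_const (p := p) (Or.inl ht.ne') using 1
  ring

theorem hasDerivAt_deriv_one_add_mul_rpow {k p t : ℝ} (ht : 0 < 1 + k * t) :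
    HasDerivAt (deriv fun s => (1 + k * s) ^ p)
      ((1 - p⁻¹) * deriv (fun s => (1 + k * s) ^ p) t ^ 2 / (1 + k * t) ^ p) t := by
  have hderiv :
      deriv (fun s => (1 + k * s) ^ p) =ᶠ[𝓝 t] fun s => p * k * (1 + k * s) ^ (p - 1) := by
    have hcont : Continuous fun s : ℝ => 1 + k * s := by fun_prop
    have hpos : ∀ᶠ s in 𝓝 t, 0 < 1 + k * s := hcont.continuousAt.eventually (lt_mem_nhds ht)
    exact hpos.mono fun s hs => (hasDerivAt_one_add_mul_rpow hs).deriv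
  rw [hderiv.eq_of_nhds]
  refine (((hasDerivAt_one_add_mul_rpow (p := p - 1) ht).const_mul (p * k)).congr_of_eventuallyEq
    hderiv).congr_deriv ?_
  have hsq : ((1 + k * t) ^ (p - 1)) ^ 2 = (1 + k * t) ^ p * (1 + k * t) ^ (p - 1 - 1) := by
    rw [← Real.rpow_natCast, ← Real.rpow_mul ht.le, ← Real.rpow_add ht]
    ring_nf
  rcases eq_or_ne p 0 with rfl | hp
  · simp
  rw [mul_pow, hsq]
  field_simp

theorem stmt_11_general {n m : ℕ} (hm : 0 < m)
    (a0 : Matrix (Fin n) (Fin m) ℝ) (ha0 : a0.rank = m)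
    (c : ℝ) (hc : c < 0) (T : ℝ) (hT : T = 2 / (|c| * (m : ℝ)))
    (A : ℝ → Matrix (Fin n) (Fin m) ℝ)
    (hA : ∀ t, A t = ((1 + c * (m : ℝ) * t / 2) ^ ((2 : ℝ) / (m : ℝ))) • a0) :
    A 0 = a0 ∧ HasDerivAt A (c • a0) 0 ∧
      (∀ t, 0 ≤ t → t < T → HasDerivAt (deriv A) (geoRHS (A t) (deriv A t)) t) ∧
      A T = 0 := by
  have hm' : (0 : ℝ) < m := Nat.cast_pos.mpr hm
  have hA' : A = fun t => (1 + c * m / 2 * t) ^ ((2 : ℝ) / m) • a0 :=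
    funext fun t => by rw [hA]; ring_nf
  have hk : c * m / 2 < 0 := by nlinarith
  have hzero : 1 + c * m / 2 * T = 0 := by
    rw [hT, abs_of_neg hc]
    field_simp [hc.ne]
    ring
  have hpos_iff : ∀ t, 0 < 1 + c * m / 2 * t ↔ t < T := fun t => by
    rw [show 1 + c * m / 2 * t = c * m / 2 * (t - T) by linear_combination hzero,
      ← smul_eq_mul, smul_pos_iff_of_neg_left hk, sub_neg]
  refine ⟨by simp [hA'], ?_, fun t _ ht => ?_, ?_⟩
  · rw [hA']
    refine ((hasDerivAt_one_add_mul_rpow (by simp)).smul_const a0).congr_deriv ?_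
    field_simp
    simp
  · have hdiff :
        ∀ᶠ s in 𝓝 t, DifferentiableAt ℝ (fun s => (1 + c * m / 2 * s) ^ ((2 : ℝ) / m)) s :=
      eventually_of_mem (Iio_mem_nhds ht) fun s hs =>
        (hasDerivAt_one_add_mul_rpow ((hpos_iff s).mpr hs)).differentiableAt
    rw [hA']
    refine hasDerivAt_deriv_smul_const_geoRHS (isUnit_transpose_mul_self_of_rank_eq ha0) hdiff ?_
    simpa [inv_div] using hasDerivAt_deriv_one_add_mul_rpow (p := 2 / m) ((hpos_iff t).mpr ht)
  · simp [hA', hzero, Real.zero_rpow, hm.ne']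

/-- with initial velocity `c • a₀`, `c < 0`, the geodesic is
`a(t) = (1 + c m t / 2)^{2/m} a₀`, reaching the zero matrix at
`T = 2 / (|c| m)`; in particular the space is geodesically incomplete. -/
theorem stmt_11 {n m : ℕ} (hmn : m ≤ n) (hm : 0 < m)
    (a0 : Matrix (Fin n) (Fin m) ℝ) (ha0 : a0.rank = m)
    (c : ℝ) (hc : c < 0) (T : ℝ) (hT : T = 2 / (|c| * (m : ℝ)))
    (A : ℝ → Matrix (Fin n) (Fin m) ℝ)
    (hA : ∀ t, A t = ((1 + c * (m : ℝ) * t / 2) ^ ((2 : ℝ) / (m : ℝ))) • a0) :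
    A 0 = a0 ∧ HasDerivAt A (c • a0) 0 ∧
      (∀ t, 0 ≤ t → t < T → HasDerivAt (deriv A) (geoRHS (A t) (deriv A t)) t) ∧
      A T = 0 :=
  stmt_11_general hm a0 ha0 c hc T hT A hA
end
end
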